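/- For two kernels P, P' with max one-step total variation distance δ₁, any policy π, discount γ∈[0,1), and rewards bounded by r_max, the value functions at any state s_t (appearing at time t) satisfy |V^{P',π}(s_t) - V^{P,π}(s_t)| ≤ min( 2 r_max δ₁ (tγ(1-γ)+1)/(1-γ)², 2 r_max/(1-γ) ). -/

import Mathlib

open scoped BigOperators

variable {S A : Type*}

/-- `P` is a transition kernel: for each state-action pair, a probability
distribution over next states. -/
def IsKernel [Fintype S] (P : S → A → S → ℝ) : Prop :=
  ∀ s a, (∀ s', 0 ≤ P s a s') ∧ ∑ s', P s a s' = 1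

/-- `π` is a stochastic policy: for each state, a probability distribution over actions. -/
def IsPolicy [Fintype A] (π : S → A → ℝ) : Prop :=
  ∀ s, (∀ a, 0 ≤ π s a) ∧ ∑ a, π s a = 1

/-- `ρ` is a probability distribution over states. -/
def IsDist [Fintype S] (ρ : S → ℝ) : Prop :=
  (∀ s, 0 ≤ ρ s) ∧ ∑ s, ρ s = 1

/-- One step of the state-marginal evolution under kernel `P` and policy `π`. -/
noncomputable def stepMarginal [Fintype S] [Fintype A]
    (P : S → A → S → ℝ) (π : S → A → ℝ) (μ : S → ℝ) : S → ℝ :=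
  fun s' => ∑ s, μ s * ∑ a, π s a * P s a s'

/-- The time-`t` state marginal under kernel `P`, policy `π`, initial distribution `ρ`. -/
noncomputable def marginal [Fintype S] [Fintype A]
    (P : S → A → S → ℝ) (π : S → A → ℝ) (ρ : S → ℝ) : ℕ → S → ℝ
  | 0 => ρ
  | t + 1 => stepMarginal P π (marginal P π ρ t)

/-- Expected one-step reward when the current state is distributed according to `μ`. -/
noncomputable def expReward [Fintype S] [Fintype A]
    (P : S → A → S → ℝ) (π : S → A → ℝ) (r : S → A → S → ℝ) (μ : S → ℝ) : ℝ :=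
  ∑ s, μ s * ∑ a, π s a * ∑ s', P s a s' * r s a s'

/-- The expected discounted return `J(P, π)` with initial distribution `ρ`. -/
noncomputable def Jret [Fintype S] [Fintype A]
    (P : S → A → S → ℝ) (π : S → A → ℝ) (r : S → A → S → ℝ) (γ : ℝ) (ρ : S → ℝ) : ℝ :=
  ∑' t : ℕ, γ ^ t * expReward P π r (marginal P π ρ t)

/-- The value function `V^{P,π}(s)`: the return starting from state `s`. -/
noncomputable def Vval [Fintype S] [Fintype A] [DecidableEq S]
    (P : S → A → S → ℝ) (π : S → A → ℝ) (r : S → A → S → ℝ) (γ : ℝ) (s : S) : ℝ :=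
  Jret P π r γ (fun s' => if s' = s then 1 else 0)

/-- The state-action value function `Q^{P,π}(s,a)`. -/
noncomputable def Qval [Fintype S] [Fintype A] [DecidableEq S]
    (P : S → A → S → ℝ) (π : S → A → ℝ) (r : S → A → S → ℝ) (γ : ℝ) (s : S) (a : A) : ℝ :=
  ∑ s', P s a s' * (r s a s' + γ * Vval P π r γ s')

/-- The advantage function `A^{P,π}(s,a) = Q^{P,π}(s,a) - V^{P,π}(s)`. -/
noncomputable def Aval [Fintype S] [Fintype A] [DecidableEq S]
    (P : S → A → S → ℝ) (π : S → A → ℝ) (r : S → A → S → ℝ) (γ : ℝ) (s : S) (a : A) : ℝ :=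
  Qval P π r γ s a - Vval P π r γ s

/-!
The rows of the state-to-state kernels `policyKernel P π` and `policyKernel P' π` are within
`2δ₁` in `ℓ¹`, and pushing two distributions through a stochastic kernel does not increase their
`ℓ¹` distance, so the time-`n` state marginals of the two chains are within `2nδ₁`. Hence the
expected rewards at time `n` differ by at most `2 r_max δ₁ (n + 1)`, and summing against `γⁿ`
gives `2 r_max δ₁ / (1 - γ)²`, which the time-`t` bound only enlarges. The second bound holds
because every expected reward lies in `[-r_max, r_max]`.
-/

open Finset

section Averages

variable {X Y : Type*} [Fintype X] [Fintype Y]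

theorem abs_sum_mul_le_mul_sum_abs (ν f : X → ℝ) {B : ℝ} (hf : ∀ x, |f x| ≤ B) :
    |∑ x, ν x * f x| ≤ B * ∑ x, |ν x| := by
  rw [mul_sum]
  refine (abs_sum_le_sum_abs _ _).trans (sum_le_sum fun x _ => ?_)
  rw [abs_mul, mul_comm B]
  exact mul_le_mul_of_nonneg_left (hf x) (abs_nonneg _)

theorem IsDist.sum_abs {μ : X → ℝ} (hμ : IsDist μ) : ∑ x, |μ x| = 1 :=
  (sum_congr rfl fun x _ => abs_of_nonneg (hμ.1 x)).trans hμ.2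

theorem IsDist.abs_sum_mul_le {μ f : X → ℝ} (hμ : IsDist μ) {B : ℝ} (hf : ∀ x, |f x| ≤ B) :
    |∑ x, μ x * f x| ≤ B := by
  simpa only [hμ.sum_abs, mul_one] using abs_sum_mul_le_mul_sum_abs μ f hf

theorem IsDist.abs_sum_mul_sub_sum_mul_le {μ : X → ℝ} (hμ : IsDist μ) (μ' : X → ℝ)
    {f f' : X → ℝ} {B ε : ℝ} (hf' : ∀ x, |f' x| ≤ B) (hff' : ∀ x, |f' x - f x| ≤ ε) :
    |∑ x, μ' x * f' x - ∑ x, μ x * f x| ≤ B * ∑ x, |μ' x - μ x| + ε := by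
  have hsplit : ∑ x, μ' x * f' x - ∑ x, μ x * f x
      = ∑ x, (μ' x - μ x) * f' x + ∑ x, μ x * (f' x - f x) := by
    rw [← sum_sub_distrib, ← sum_add_distrib]
    exact sum_congr rfl fun x _ => by ring
  rw [hsplit]
  exact (abs_add_le _ _).trans
    (add_le_add (abs_sum_mul_le_mul_sum_abs _ _ hf') (hμ.abs_sum_mul_le hff'))

theorem IsDist.comp {μ : X → ℝ} (hμ : IsDist μ) {K : X → Y → ℝ} (hK : IsPolicy K) :
    IsDist fun y => ∑ x, μ x * K x y := by
  refine ⟨fun y => sum_nonneg fun x _ => mul_nonneg (hμ.1 x) ((hK x).1 y), ?_⟩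
  rw [sum_comm]
  simp only [← mul_sum, (hK _).2, mul_one]
  exact hμ.2

theorem IsDist.sum_abs_comp_sub_comp_le {μ : X → ℝ} (hμ : IsDist μ) (μ' : X → ℝ)
    {K K' : X → Y → ℝ} (hK' : IsPolicy K') {ε : ℝ} (hKK' : ∀ x, ∑ y, |K' x y - K x y| ≤ ε) :
    ∑ y, |∑ x, μ' x * K' x y - ∑ x, μ x * K x y| ≤ ∑ x, |μ' x - μ x| + ε := by
  have hpoint : ∀ x y, |μ' x * K' x y - μ x * K x y|
      ≤ |μ' x - μ x| * K' x y + μ x * |K' x y - K x y| := fun x y => by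
    calc |μ' x * K' x y - μ x * K x y|
        = |(μ' x - μ x) * K' x y + μ x * (K' x y - K x y)| := by ring_nf
      _ ≤ _ := by
        refine (abs_add_le _ _).trans_eq ?_
        rw [abs_mul, abs_mul, abs_of_nonneg ((hK' x).1 y), abs_of_nonneg (hμ.1 x)]
  calc ∑ y, |∑ x, μ' x * K' x y - ∑ x, μ x * K x y|
      ≤ ∑ y, ∑ x, (|μ' x - μ x| * K' x y + μ x * |K' x y - K x y|) := by
        refine sum_le_sum fun y _ => ?_
        rw [← sum_sub_distrib]
        exact (abs_sum_le_sum_abs _ _).trans (sum_le_sum fun x _ => hpoint x y)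
    _ = ∑ x, (|μ' x - μ x| + μ x * ∑ y, |K' x y - K x y|) := by
        rw [sum_comm]
        refine sum_congr rfl fun x _ => ?_
        rw [sum_add_distrib, ← mul_sum, ← mul_sum, (hK' x).2, mul_one]
    _ ≤ ∑ x, (|μ' x - μ x| + μ x * ε) := by
        gcongr with x
        exacts [hμ.1 x, hKK' x]
    _ = ∑ x, |μ' x - μ x| + ε := by rw [sum_add_distrib, ← sum_mul, hμ.2, one_mul]

end Averages

theorem IsPolicy.isDist [Fintype A] {π : S → A → ℝ} (hπ : IsPolicy π) (s : S) :
    IsDist (π s) :=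
  hπ s

theorem IsKernel.isDist [Fintype S] {P : S → A → S → ℝ} (hP : IsKernel P) (s : S) (a : A) :
    IsDist (P s a) :=
  hP s a

section MarkovChain

variable [Fintype S] [Fintype A] {P P' : S → A → S → ℝ} {π : S → A → ℝ}
  {r : S → A → S → ℝ} {rmax ε : ℝ} {ρ : S → ℝ}

noncomputable def policyKernel (P : S → A → S → ℝ) (π : S → A → ℝ) (s s' : S) : ℝ :=
  ∑ a, π s a * P s a s'

noncomputable def policyReward (P : S → A → S → ℝ) (π : S → A → ℝ) (r : S → A → S → ℝ)
    (s : S) : ℝ :=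
  ∑ a, π s a * ∑ s', P s a s' * r s a s'

theorem isPolicy_policyKernel (hP : IsKernel P) (hπ : IsPolicy π) :
    IsPolicy (policyKernel P π) :=
  fun s => (hπ.isDist s).comp (hP s)

theorem sum_abs_policyKernel_sub_le (hP' : IsKernel P') (hπ : IsPolicy π)
    (hε : ∀ s a, ∑ s', |P' s a s' - P s a s'| ≤ ε) (s : S) :
    ∑ s', |policyKernel P' π s s' - policyKernel P π s s'| ≤ ε := by
  simpa [policyKernel] using (hπ.isDist s).sum_abs_comp_sub_comp_le (π s) (hP' s) (hε s)

theorem isDist_marginal (hP : IsKernel P) (hπ : IsPolicy π) (hρ : IsDist ρ) (n : ℕ) :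
    IsDist (marginal P π ρ n) := by
  induction n with
  | zero => exact hρ
  | succ n ih => exact ih.comp (isPolicy_policyKernel hP hπ)

theorem sum_abs_marginal_sub_le (hP : IsKernel P) (hP' : IsKernel P') (hπ : IsPolicy π)
    (hε : ∀ s a, ∑ s', |P' s a s' - P s a s'| ≤ ε) (hρ : IsDist ρ) (n : ℕ) :
    ∑ s, |marginal P' π ρ n s - marginal P π ρ n s| ≤ n * ε := by
  induction n with
  | zero => simp [marginal]
  | succ n ih =>
    calc ∑ s, |marginal P' π ρ (n + 1) s - marginal P π ρ (n + 1) s|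
        ≤ ∑ s, |marginal P' π ρ n s - marginal P π ρ n s| + ε :=
          (isDist_marginal hP hπ hρ n).sum_abs_comp_sub_comp_le _
            (isPolicy_policyKernel hP' hπ) (sum_abs_policyKernel_sub_le hP' hπ hε)
      _ ≤ (n + 1 : ℕ) * ε := by push_cast; linarith

theorem abs_policyReward_le (hP : IsKernel P) (hπ : IsPolicy π)
    (hr : ∀ s a s', |r s a s'| ≤ rmax) (s : S) :
    |policyReward P π r s| ≤ rmax :=
  (hπ.isDist s).abs_sum_mul_le fun a => (hP.isDist s a).abs_sum_mul_le (hr s a)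

theorem abs_policyReward_sub_le (hP' : IsKernel P') (hπ : IsPolicy π)
    (hr : ∀ s a s', |r s a s'| ≤ rmax) (hε : ∀ s a, ∑ s', |P' s a s' - P s a s'| ≤ ε)
    (s : S) :
    |policyReward P' π r s - policyReward P π r s| ≤ rmax * ε := by
  have hrow : ∀ a, |∑ s', P' s a s' * r s a s' - ∑ s', P s a s' * r s a s'| ≤ rmax * ε := by
    intro a
    have hrmax : 0 ≤ rmax := (abs_nonneg _).trans (hr s a s)
    rw [← sum_sub_distrib]
    simp only [← sub_mul]
    exact (abs_sum_mul_le_mul_sum_abs _ _ (hr s a)).trans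
      (mul_le_mul_of_nonneg_left (hε s a) hrmax)
  simpa [policyReward] using (hπ.isDist s).abs_sum_mul_sub_sum_mul_le (π s)
    (fun a => (hP'.isDist s a).abs_sum_mul_le (hr s a)) hrow

theorem abs_expReward_le (hP : IsKernel P) (hπ : IsPolicy π)
    (hr : ∀ s a s', |r s a s'| ≤ rmax) {μ : S → ℝ} (hμ : IsDist μ) :
    |expReward P π r μ| ≤ rmax :=
  hμ.abs_sum_mul_le (abs_policyReward_le hP hπ hr)

theorem abs_expReward_marginal_sub_le (hrmax : 0 ≤ rmax) (hP : IsKernel P)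
    (hP' : IsKernel P') (hπ : IsPolicy π) (hr : ∀ s a s', |r s a s'| ≤ rmax)
    (hε : ∀ s a, ∑ s', |P' s a s' - P s a s'| ≤ ε) (hρ : IsDist ρ) (n : ℕ) :
    |expReward P' π r (marginal P' π ρ n) - expReward P π r (marginal P π ρ n)|
      ≤ rmax * ε * (n + 1) := by
  calc |expReward P' π r (marginal P' π ρ n) - expReward P π r (marginal P π ρ n)|
      ≤ rmax * ∑ s, |marginal P' π ρ n s - marginal P π ρ n s| + rmax * ε :=
        (isDist_marginal hP hπ hρ n).abs_sum_mul_sub_sum_mul_le _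
          (abs_policyReward_le hP' hπ hr) (abs_policyReward_sub_le hP' hπ hr hε)
    _ ≤ rmax * (n * ε) + rmax * ε := by
        gcongr
        exact sum_abs_marginal_sub_le hP hP' hπ hε hρ n
    _ = rmax * ε * (n + 1) := by ring

end MarkovChain

section Discounted

variable {γ : ℝ}

theorem norm_pow_mul_le_pow_mul (hγ0 : 0 ≤ γ) (n : ℕ) {a c : ℝ} (h : |a| ≤ c) :
    ‖γ ^ n * a‖ ≤ γ ^ n * c := by
  rw [norm_mul, norm_pow, Real.norm_of_nonneg hγ0, Real.norm_eq_abs]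
  exact mul_le_mul_of_nonneg_left h (pow_nonneg hγ0 n)

theorem summable_pow_mul_of_abs_le (hγ0 : 0 ≤ γ) (hγ1 : γ < 1) {a : ℕ → ℝ} {B : ℝ}
    (ha : ∀ n, |a n| ≤ B) : Summable fun n => γ ^ n * a n :=
  ((summable_geometric_of_lt_one hγ0 hγ1).mul_right B).of_norm_bounded
    fun n => norm_pow_mul_le_pow_mul hγ0 n (ha n)

theorem abs_tsum_pow_mul_le (hγ0 : 0 ≤ γ) {a c : ℕ → ℝ} {C : ℝ}
    (hc : HasSum (fun n => γ ^ n * c n) C) (ha : ∀ n, |a n| ≤ c n) :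
    |∑' n, γ ^ n * a n| ≤ C :=
  tsum_of_norm_bounded hc fun n => norm_pow_mul_le_pow_mul hγ0 n (ha n)

variable [Fintype S] [Fintype A] {P P' : S → A → S → ℝ} {π : S → A → ℝ}
  {r : S → A → S → ℝ} {rmax ε : ℝ} {ρ : S → ℝ}

theorem Jret_sub_Jret_eq_tsum (hP : IsKernel P) (hP' : IsKernel P') (hπ : IsPolicy π)
    (hr : ∀ s a s', |r s a s'| ≤ rmax) (hρ : IsDist ρ) (hγ0 : 0 ≤ γ) (hγ1 : γ < 1) :
    Jret P' π r γ ρ - Jret P π r γ ρ = ∑' n, γ ^ n *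
      (expReward P' π r (marginal P' π ρ n) - expReward P π r (marginal P π ρ n)) := by
  have hsum : ∀ {Q : S → A → S → ℝ}, IsKernel Q →
      Summable fun n => γ ^ n * expReward Q π r (marginal Q π ρ n) := fun hQ =>
    summable_pow_mul_of_abs_le hγ0 hγ1 fun n =>
      abs_expReward_le hQ hπ hr (isDist_marginal hQ hπ hρ n)
  simp only [Jret, mul_sub]
  exact ((hsum hP').tsum_sub (hsum hP)).symm

theorem abs_Jret_sub_le_two_mul_div (hP : IsKernel P) (hP' : IsKernel P') (hπ : IsPolicy π)
    (hr : ∀ s a s', |r s a s'| ≤ rmax) (hρ : IsDist ρ) (hγ0 : 0 ≤ γ) (hγ1 : γ < 1) :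
    |Jret P' π r γ ρ - Jret P π r γ ρ| ≤ 2 * rmax / (1 - γ) := by
  rw [Jret_sub_Jret_eq_tsum hP hP' hπ hr hρ hγ0 hγ1]
  refine abs_tsum_pow_mul_le hγ0 (c := fun _ => 2 * rmax) ?_ fun n => ?_
  · simpa only [div_eq_mul_inv, mul_comm] using
      (hasSum_geometric_of_lt_one hγ0 hγ1).mul_right (2 * rmax)
  · have h' := abs_expReward_le hP' hπ hr (isDist_marginal hP' hπ hρ n)
    have h := abs_expReward_le hP hπ hr (isDist_marginal hP hπ hρ n)
    linarith [abs_sub _ _ |>.trans (add_le_add h' h)]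

theorem abs_Jret_sub_le_mul_div_sq (hrmax : 0 ≤ rmax) (hP : IsKernel P) (hP' : IsKernel P')
    (hπ : IsPolicy π) (hr : ∀ s a s', |r s a s'| ≤ rmax)
    (hε : ∀ s a, ∑ s', |P' s a s' - P s a s'| ≤ ε) (hρ : IsDist ρ) (hγ0 : 0 ≤ γ)
    (hγ1 : γ < 1) :
    |Jret P' π r γ ρ - Jret P π r γ ρ| ≤ rmax * ε / (1 - γ) ^ 2 := by
  rw [Jret_sub_Jret_eq_tsum hP hP' hπ hr hρ hγ0 hγ1]
  refine abs_tsum_pow_mul_le hγ0 ?_ (abs_expReward_marginal_sub_le hrmax hP hP' hπ hr hε hρ)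
  have hγ : ‖γ‖ < 1 := by rwa [Real.norm_of_nonneg hγ0]
  have hfun : (fun n : ℕ => γ ^ n * (rmax * ε * (n + 1)))
      = fun n => rmax * ε * ((n + 1).choose 1 * γ ^ n) := by
    ext n
    rw [Nat.choose_one_right]
    push_cast
    ring
  rw [hfun, show rmax * ε / (1 - γ) ^ 2 = rmax * ε * (1 / (1 - γ) ^ (1 + 1)) by ring]
  exact (hasSum_choose_mul_geometric_of_norm_lt_one 1 hγ).mul_left (rmax * ε)

end Discounted

/-- value difference bound between two kernels for a state appearing
at time `t`. -/
theorem value_diff_kernels [Fintype S] [Fintype A] [DecidableEq S]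
    (P P' : S → A → S → ℝ) (π : S → A → ℝ) (r : S → A → S → ℝ) (γ : ℝ)
    (rmax δ₁ : ℝ)
    (hP : IsKernel P) (hP' : IsKernel P') (hπ : IsPolicy π)
    (hγ0 : 0 ≤ γ) (hγ1 : γ < 1)
    (hr : ∀ s a s', |r s a s'| ≤ rmax)
    (hδ : ∀ s a, (1 / 2) * ∑ s', |P' s a s' - P s a s'| ≤ δ₁) :
    ∀ (t : ℕ) (s : S),
      |Vval P' π r γ s - Vval P π r γ s| ≤
        min (2 * rmax * δ₁ * ((t : ℝ) * γ * (1 - γ) + 1) / (1 - γ) ^ 2)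
          (2 * rmax / (1 - γ)) := by
  intro t s
  obtain ⟨a, -⟩ := exists_ne_zero_of_sum_ne_zero (by rw [(hπ s).2]; exact one_ne_zero)
  have hrmax : 0 ≤ rmax := (abs_nonneg _).trans (hr s a s)
  have hε : ∀ s a, ∑ s', |P' s a s' - P s a s'| ≤ 2 * δ₁ := fun s a => by linarith [hδ s a]
  have hδ₁ : 0 ≤ δ₁ := by linarith [(sum_nonneg fun _ _ => abs_nonneg _).trans (hε s a)]
  have hρ : IsDist fun s' => if s' = s then (1 : ℝ) else 0 :=
    ⟨fun s' => by positivity, by simp⟩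
  refine le_min ?_ (abs_Jret_sub_le_two_mul_div hP hP' hπ hr hρ hγ0 hγ1)
  have ht : 0 ≤ (t : ℝ) * γ * (1 - γ) := mul_nonneg (by positivity) (by linarith)
  calc |Vval P' π r γ s - Vval P π r γ s| ≤ rmax * (2 * δ₁) / (1 - γ) ^ 2 :=
        abs_Jret_sub_le_mul_div_sq hrmax hP hP' hπ hr hε hρ hγ0 hγ1
    _ ≤ 2 * rmax * δ₁ * ((t : ℝ) * γ * (1 - γ) + 1) / (1 - γ) ^ 2 := by
        refine div_le_div_of_nonneg_right ?_ (by positivity)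
        nlinarith [mul_nonneg (mul_nonneg hrmax hδ₁) ht]
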